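/- Let q be a primitive l-th root of unity with l > 2 and l not twice an odd integer, so l' = L is even, where L is the smallest even multiple of l. Then in U_q(osp(1|2)) the following relation holds in the centre: (-1)^{L/2} Q_{L/2}(C) = -k^L - k^{-L} + η^L f^L e^L, where C = S^2 + 2 and Q_m is defined by Q_0 = 2, Q_1 = X, Q_{m+1} = X Q_m - Q_{m-1}. -/

import Mathlib

/-!
`S` anticommutes with `e` and commutes with `k`, so the elements
`x_j = sq q^j k - (sq q^j)⁻¹ k⁻¹ - (-1)^j S` satisfy `x_0 = η f e` and `x_j e = e x_{j+1}`;
hence `η^m f^m e^m = x_0 x_1 ⋯ x_{m-1}`, a product inside the commutative subalgebra generated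
by `k^{±1}` and `S`. For `L = 2M` we have `q^M = ±1`, and
`x_j x_{M+j} = q^M (a_j k² + a_j⁻¹ k⁻² - C)` with `a_j = q (q²)^j` running over the roots of
`X^M - q^M`. Writing `C = z + z⁻¹` (after
adjoining a root of `z² - C z + 1`), `a u + a⁻¹ u⁻¹ - (z + z⁻¹) = -z⁻¹ (z - a u)(z - a⁻¹ u⁻¹)`
and `∏_j (X - a_j) = X^M - q^M` give
`∏_j (a_j k² + a_j⁻¹ k⁻² - C) = k^L + k^{-L} + (-1)^M (z^M + z^{-M})`, and
`z^M + z^{-M} = Q_M(z + z⁻¹)`.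
-/

noncomputable def Qcheb : ℕ → Polynomial ℤ
  | 0 => 2
  | 1 => Polynomial.X
  | (m + 2) => Polynomial.X * Qcheb (m + 1) - Qcheb m

open Polynomial

theorem aeval_ringHom_apply {R S F : Type*} [Ring R] [Ring S] [FunLike F R S] [RingHomClass F R S]
    (φ : F) (x : R) (p : ℤ[X]) : aeval (φ x) p = φ (aeval x p) :=
  aeval_algHom_apply (RingHomClass.toRingHom φ).toIntAlgHom x p

theorem aeval_Qcheb_add {R : Type*} [CommRing R] {z z' : R} (h : z * z' = 1) :
    ∀ m : ℕ, aeval (z + z') (Qcheb m) = z ^ m + z' ^ m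
  | 0 => by simp only [Qcheb, pow_zero, map_ofNat]; norm_num
  | 1 => by simp [Qcheb]
  | m + 2 => by
    simp only [Qcheb, map_sub, map_mul, aeval_X, aeval_Qcheb_add h (m + 1), aeval_Qcheb_add h m]
    linear_combination (z ^ m + z' ^ m) * h

section DicksonProduct

variable {K R : Type*} [Field K] [CommRing R] [Algebra K R]

theorem prod_sub_smul_of_isPrimitiveRoot {ω : K} {M : ℕ} (hω : IsPrimitiveRoot ω M)
    (hM : 0 < M) (α : K) {x y y' : R} (hy : y * y' = 1) :
    ∏ j ∈ Finset.range M, (x - (ω ^ j * α) • y) = x ^ M - α ^ M • y ^ M := by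
  have hroots := congrArg (aeval (x * y')) (X_pow_sub_C_eq_prod hω hM (rfl : α ^ M = _))
  simp only [map_sub, map_pow, aeval_X, aeval_C, map_prod] at hroots
  have hfactor : ∀ j ∈ Finset.range M,
      x - (ω ^ j * α) • y = y * (x * y' - algebraMap K R (ω ^ j * α)) := by
    intro j _
    rw [Algebra.smul_def]
    linear_combination (-x) * hy
  have hyM : y ^ M * y' ^ M = 1 := by rw [← mul_pow, hy, one_pow]
  rw [Finset.prod_congr rfl hfactor, Finset.prod_mul_distrib, Finset.prod_const,
    Finset.card_range, ← hroots, Algebra.smul_def, map_pow]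
  linear_combination x ^ M * hyM

theorem prod_smul_add_inv_smul_sub_add {ω : K} {M : ℕ} (hω : IsPrimitiveRoot ω M) (hM : 0 < M)
    {a : K} (ha : a ≠ 0) {u u' z z' : R} (hu : u * u' = 1) (hz : z * z' = 1) :
    ∏ j ∈ Finset.range M, ((ω ^ j * a) • u + (ω ^ j * a)⁻¹ • u' - (z + z'))
      = (-1) ^ M * (z ^ M + z' ^ M - a ^ M • u ^ M - (a ^ M)⁻¹ • u' ^ M) := by
  have hω0 : ω ≠ 0 := hω.ne_zero hM.ne'
  have hfactor : ∀ j ∈ Finset.range M,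
      (ω ^ j * a) • u + (ω ^ j * a)⁻¹ • u' - (z + z')
        = -z' * ((z - (ω ^ j * a) • u) * (z - (ω⁻¹ ^ j * a⁻¹) • u')) := by
    intro j _
    rw [mul_inv, ← inv_pow]
    have hc : algebraMap K R (ω ^ j * a) * algebraMap K R (ω⁻¹ ^ j * a⁻¹) = 1 := by
      rw [← map_mul, inv_pow, ← mul_inv, mul_inv_cancel₀ (by positivity), map_one]
    simp only [Algebra.smul_def]
    linear_combination (z - algebraMap K R (ω ^ j * a) * u
      - algebraMap K R (ω⁻¹ ^ j * a⁻¹) * u') * hz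
      + z' * algebraMap K R (ω ^ j * a) * algebraMap K R (ω⁻¹ ^ j * a⁻¹) * hu + z' * hc
  have hsM : algebraMap K R (a ^ M) * algebraMap K R (a ^ M)⁻¹ = 1 := by
    rw [← map_mul, mul_inv_cancel₀ (by positivity), map_one]
  have hzM : z ^ M * z' ^ M = 1 := by rw [← mul_pow, hz, one_pow]
  have huM : u ^ M * u' ^ M = 1 := by rw [← mul_pow, hu, one_pow]
  rw [Finset.prod_congr rfl hfactor, Finset.prod_mul_distrib, Finset.prod_mul_distrib,
    Finset.prod_const, Finset.card_range, prod_sub_smul_of_isPrimitiveRoot hω hM a hu,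
    prod_sub_smul_of_isPrimitiveRoot hω.inv hM a⁻¹ (mul_comm u u' ▸ hu), inv_pow]
  simp only [Algebra.smul_def, neg_pow z']
  linear_combination (-1) ^ M * (z ^ M - algebraMap K R (a ^ M) * u ^ M
      - algebraMap K R (a ^ M)⁻¹ * u' ^ M) * hzM
    + (-1) ^ M * z' ^ M * algebraMap K R (a ^ M) * algebraMap K R (a ^ M)⁻¹ * huM
    + (-1) ^ M * z' ^ M * hsM

theorem algebraMap_adjoinRoot_injective_of_monic {g : R[X]} (hg : g.Monic)
    (hdeg : 0 < g.degree) :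
    Function.Injective (algebraMap R (AdjoinRoot g)) := by
  rw [injective_iff_map_eq_zero]
  intro r hr
  by_contra hr0
  exact AdjoinRoot.mk_ne_zero_of_degree_lt hg (C_ne_zero.mpr hr0)
    (degree_C_le.trans_lt hdeg) hr

theorem prod_smul_add_inv_smul_sub {ω : K} {M : ℕ} (hω : IsPrimitiveRoot ω M) (hM : 0 < M)
    {a : K} (ha : a ≠ 0) {u u' : R} (hu : u * u' = 1) (Y : R) :
    ∏ j ∈ Finset.range M, ((ω ^ j * a) • u + (ω ^ j * a)⁻¹ • u' - Y)
      = (-1) ^ M * (aeval Y (Qcheb M) - a ^ M • u ^ M - (a ^ M)⁻¹ • u' ^ M) := by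
  nontriviality R
  -- `Y = z + z⁻¹` in the faithful extension obtained by adjoining a root `z` of `z² - Y z + 1`
  set g : R[X] := X ^ 2 + (-C Y * X + 1)
  have hlow : (-C Y * X + 1).degree < 2 :=
    (show (-C Y * X + 1).degree ≤ (1 : WithBot ℕ) by compute_degree).trans_lt (by norm_num)
  have hg : g.Monic := monic_X_pow_add hlow
  have hdeg : g.degree = 2 := by
    rw [degree_add_eq_left_of_degree_lt (by rwa [degree_X_pow]), degree_X_pow]; rfl
  set ι := IsScalarTower.toAlgHom K R (AdjoinRoot g)
  set z := AdjoinRoot.root g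
  have hz : z * (ι Y - z) = 1 := by
    have := AdjoinRoot.eval₂_root g
    simp only [g, eval₂_add, eval₂_neg, eval₂_mul, eval₂_X_pow, eval₂_X, eval₂_C,
      eval₂_one] at this
    simp only [ι, IsScalarTower.coe_toAlgHom', AdjoinRoot.algebraMap_eq]
    linear_combination -this
  have hι : Function.Injective ι :=
    algebraMap_adjoinRoot_injective_of_monic hg (by rw [hdeg]; norm_num)
  apply hι
  have := prod_smul_add_inv_smul_sub_add hω hM ha (u := ι u) (u' := ι u')
    (by rw [← map_mul, hu, map_one]) hz
  rw [add_sub_cancel, ← aeval_Qcheb_add hz, add_sub_cancel] at this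
  simpa only [map_prod, map_sub, map_add, map_mul, map_pow, map_neg, map_one, map_smul,
    aeval_ringHom_apply] using this

end DicksonProduct

section FePowFactor

variable {K R : Type*} [Field K] [Ring R] [Algebra K R]

/-- With `t, t', X` specialised to `k, k⁻¹, S`, the `j`-th factor `x_j` of
`η^m f^m e^m = x_0 x_1 ⋯ x_{m-1}`. -/
def fePowFactor (sq q : K) (t t' X : R) (j : ℕ) : R :=
  (sq * q ^ j) • t - (sq * q ^ j)⁻¹ • t' - (-1 : K) ^ j • X

theorem fePowFactor_add_of_pow_eq {sq q : K} {M : ℕ} (hσ : q ^ M = (-1) ^ (M + 1))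
    (t t' X : R) (j : ℕ) :
    fePowFactor sq q t t' X (M + j) = q ^ M • fePowFactor sq q t t' (-X) j := by
  have hσinv : (q ^ M)⁻¹ = q ^ M := by rw [hσ, ← inv_pow, inv_neg, inv_one]
  have hsign : (-1 : K) ^ (M + j) = -q ^ M * (-1) ^ j := by rw [hσ]; ring
  simp only [fePowFactor, pow_add, hsign, mul_left_comm sq (q ^ M), mul_inv, hσinv]
  simp only [smul_sub, smul_neg, smul_smul]
  module

theorem map_fePowFactor {A : Type*} [Ring A] [Algebra K A] (φ : R →ₐ[K] A) (sq q : K)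
    (t t' X : R) (j : ℕ) :
    φ (fePowFactor sq q t t' X j) = fePowFactor sq q (φ t) (φ t') (φ X) j := by
  simp only [fePowFactor, map_sub, map_smul]

end FePowFactor

section PairedFactors

variable {K R : Type*} [Field K] [CommRing R] [Algebra K R]

theorem fePowFactor_mul_fePowFactor_neg {sq q : K} (hsq : sq ^ 2 = q) (hq : q ≠ 0)
    {t t' : R} (ht : t * t' = 1) (X : R) (j : ℕ) :
    fePowFactor sq q t t' X j * fePowFactor sq q t t' (-X) j
      = ((q ^ 2) ^ j * q) • t ^ 2 + ((q ^ 2) ^ j * q)⁻¹ • t' ^ 2 - (X ^ 2 + 2) := by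
  have hsq0 : sq ≠ 0 := by rintro rfl; exact hq (by rw [← hsq]; ring)
  have hc : (sq * q ^ j) ^ 2 = (q ^ 2) ^ j * q := by rw [← hsq]; ring
  have hcc : algebraMap K R (sq * q ^ j) * algebraMap K R (sq * q ^ j)⁻¹ = 1 := by
    rw [← map_mul, mul_inv_cancel₀ (by positivity), map_one]
  have hsign : (algebraMap K R (-1) ^ j) ^ 2 = 1 := by
    rw [map_neg, map_one, ← pow_mul, mul_comm, pow_mul]; simp
  simp only [fePowFactor, Algebra.smul_def, ← hc, ← inv_pow, map_pow]
  linear_combination (-2 : R) * hcc - X ^ 2 * hsign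
    + (- 2 * algebraMap K R (sq * q ^ j) * algebraMap K R (sq * q ^ j)⁻¹) * ht

theorem prod_range_two_mul_fePowFactor {sq q : K} (hsq : sq ^ 2 = q) {M : ℕ} (hM : 0 < M)
    (hw : IsPrimitiveRoot (q ^ 2) M) (hσ : q ^ M = (-1) ^ (M + 1)) {t t' : R} (ht : t * t' = 1)
    (X : R) :
    ∏ j ∈ Finset.range (2 * M), fePowFactor sq q t t' X j
      = t ^ (2 * M) + t' ^ (2 * M) + (-1) ^ M * aeval (X ^ 2 + 2) (Qcheb M) := by
  have hq : q ≠ 0 := fun h => hw.ne_zero hM.ne' (by rw [h, zero_pow two_ne_zero])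
  have hσM : (q ^ M) ^ M = 1 := by
    rw [hσ, ← pow_mul, mul_comm]; exact (Nat.even_mul_succ_self M).neg_one_pow
  have hσinv : (q ^ M)⁻¹ = q ^ M := by rw [hσ, ← inv_pow, inv_neg, inv_one]
  have hsignσ : (-1 : R) ^ M * algebraMap K R (q ^ M) = -1 := by
    rw [hσ, map_pow, map_neg, map_one, ← pow_add]; exact Odd.neg_one_pow ⟨M, by ring⟩
  have htt : t ^ 2 * t' ^ 2 = 1 := by rw [← mul_pow, ht, one_pow]
  rw [two_mul, Finset.prod_range_add, ← Finset.prod_mul_distrib]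
  simp_rw [fePowFactor_add_of_pow_eq hσ, mul_smul_comm, fePowFactor_mul_fePowFactor_neg hsq hq ht]
  rw [← Finset.smul_prod, Finset.card_range, hσM, one_smul,
    prod_smul_add_inv_smul_sub hw hM hq htt, ← pow_mul, ← pow_mul, hσinv, ← two_mul,
    Algebra.smul_def, Algebra.smul_def]
  linear_combination (-(t ^ (2 * M) + t' ^ (2 * M))) * hsignσ

end PairedFactors

theorem IsPrimitiveRoot.exists_half_of_not_two_mul_odd {R : Type*} [CommRing R] [IsDomain R]
    {q : R} {l : ℕ} (hprim : IsPrimitiveRoot q l) (hl : 0 < l)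
    (hnot : ¬ ∃ m : ℕ, Odd m ∧ l = 2 * m) {L : ℕ} (hL : L = if Even l then l else 2 * l) :
    ∃ M : ℕ, L = 2 * M ∧ 0 < M ∧ IsPrimitiveRoot (q ^ 2) M ∧ q ^ M = (-1) ^ (M + 1) := by
  by_cases hev : Even l
  · obtain ⟨c, hc⟩ := hev
    have hc2 : l = 2 * c := by omega
    obtain ⟨d, hd⟩ : Even c := Nat.not_odd_iff_even.mp fun hodd => hnot ⟨c, hodd, hc2⟩
    refine ⟨c, by rw [hL, if_pos ⟨c, hc⟩, hc2], by omega, hprim.pow (by omega) hc2, ?_⟩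
    rw [(hprim.pow (by omega) (by omega : l = c * 2)).eq_neg_one_of_two_right,
      Odd.neg_one_pow ⟨d, by omega⟩]
  · have hodd : Odd l := Nat.not_even_iff_odd.mp hev
    refine ⟨l, by rw [hL, if_neg hev], hl,
      hprim.pow_of_coprime 2 (Nat.coprime_two_left.mpr hodd), ?_⟩
    rw [hprim.pow_eq_one, (hodd.add_one).neg_one_pow]

section NoncommutativeAlgebra

variable {K A : Type*} [Field K] [Ring A] [Algebra K A]

theorem inv_mul_eq_inv_smul_of_mul_eq_smul {q : K} (hq : q ≠ 0) {k : Aˣ} {e : A}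
    (h : (k : A) * e = q • (e * k)) : ((k⁻¹ : Aˣ) : A) * e = q⁻¹ • (e * (k⁻¹ : Aˣ)) := by
  have : e * (k⁻¹ : Aˣ) = q • ((k⁻¹ : Aˣ) * e) := by
    calc e * (k⁻¹ : Aˣ) = (k⁻¹ : Aˣ) * ((k : A) * e) * (k⁻¹ : Aˣ) := by simp [← mul_assoc]
      _ = q • ((k⁻¹ : Aˣ) * e) := by simp [h, mul_assoc]
  rw [this, smul_smul, inv_mul_cancel₀ hq, one_smul]

theorem commute_mul_of_mul_eq_smul {r s : K} (hrs : r * s = 1) {k e f : A}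
    (he : k * e = s • (e * k)) (hf : k * f = r • (f * k)) : Commute k (f * e) := by
  calc k * (f * e) = r • (f * (k * e)) := by rw [← mul_assoc, hf, smul_mul_assoc, mul_assoc]
    _ = f * e * k := by rw [he, mul_smul_comm, smul_smul, hrs, one_smul, mul_assoc]

theorem e_mul_S_eq_neg {q sq η : K} (hq : q ≠ 0) (hq2 : q ^ 2 ≠ 1) (hsq : sq ^ 2 = q)
    (hη : η = (sq + sq⁻¹) * (q - q⁻¹)) {e f : A} {k : Aˣ}
    (rel1 : (k : A) * e = q • (e * (k : A)))
    (rel3 : e * f + f * e = (q - q⁻¹)⁻¹ • ((k : A) - ((k⁻¹ : Aˣ) : A))) {S : A}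
    (hS : S = sq • (k : A) - sq⁻¹ • ((k⁻¹ : Aˣ) : A) - η • (f * e)) :
    e * S = -(S * e) := by
  have hqq : q - q⁻¹ ≠ 0 := by
    rw [sub_ne_zero]; intro h; apply hq2; field_simp at h; rw [← h]
  have hk'e := inv_mul_eq_inv_smul_of_mul_eq_smul hq rel1
  have hefe : e * (f * e) = (q - q⁻¹)⁻¹ • (q • (e * k) - q⁻¹ • (e * (k⁻¹ : Aˣ)))
      - f * (e * e) := by
    rw [← mul_assoc, eq_sub_of_add_eq rel3, sub_mul, smul_mul_assoc, sub_mul, rel1, hk'e,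
      mul_assoc]
  rw [eq_neg_iff_add_eq_zero, hS]
  simp only [mul_sub, sub_mul, mul_smul_comm, smul_mul_assoc, mul_assoc, rel1, hk'e, hefe]
  have hμ : η * (q - q⁻¹)⁻¹ = sq + sq⁻¹ := by rw [hη, mul_inv_cancel_right₀ hqq]
  have hsq_div : sq * q⁻¹ = sq⁻¹ := by rw [← hsq]; field_simp
  have hdiv_sq : sq⁻¹ * q = sq := by rw [← hsq]; field_simp
  match_scalars
  · linear_combination (-q) * hμ - hdiv_sq
  · linear_combination q⁻¹ * hμ + hsq_div
  · ring

theorem fePowFactor_mul_eq_mul_fePowFactor_succ {sq q : K} {t t' X e : A}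
    (ht : t * e = q • (e * t)) (ht' : t' * e = q⁻¹ • (e * t')) (hX : e * X = -(X * e))
    (j : ℕ) : fePowFactor sq q t t' X j * e = e * fePowFactor sq q t t' X (j + 1) := by
  have hXe : X * e = -(e * X) := by rw [hX, neg_neg]
  simp only [fePowFactor, sub_mul, mul_sub, smul_mul_assoc, mul_smul_comm, ht, ht', hXe,
    pow_succ, mul_inv, smul_smul]
  module

theorem smul_pow_mul_pow_eq_map_prod {R : Type*} [CommRing R] [Algebra K R] (φ : R →ₐ[K] A)
    (ξ : ℕ → R) {η : K} {e f : A} (h0 : φ (ξ 0) = η • (f * e))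
    (hstep : ∀ j, φ (ξ j) * e = e * φ (ξ (j + 1))) (m : ℕ) :
    η ^ m • (f ^ m * e ^ m) = φ (∏ j ∈ Finset.range m, ξ j) := by
  have hpush : ∀ n, φ (ξ 0) * e ^ n = e ^ n * φ (ξ n) := by
    intro n
    induction n with
    | zero => simp
    | succ n ih => rw [pow_succ, ← mul_assoc, ih, mul_assoc, hstep, ← mul_assoc]
  induction m with
  | zero => simp
  | succ m ih =>
    calc η ^ (m + 1) • (f ^ (m + 1) * e ^ (m + 1))
        = η ^ m • (f ^ m * (η • (f * e) * e ^ m)) := by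
          rw [pow_succ η, pow_succ f, pow_succ' e, mul_smul]
          simp only [smul_mul_assoc, mul_smul_comm, mul_assoc]
      _ = η ^ m • (f ^ m * e ^ m) * φ (ξ m) := by
          rw [← h0, hpush, smul_mul_assoc, mul_assoc]
      _ = φ (∏ j ∈ Finset.range (m + 1), ξ j) := by
          rw [ih, Finset.prod_range_succ, map_mul]

variable (K) in
noncomputable def unitsEval (k : Aˣ) : LaurentPolynomial K →ₐ[K] A :=
  AddMonoidAlgebra.lift K A ℤ ((Units.coeHom A).comp (zpowersHom Aˣ k))

theorem unitsEval_T (k : Aˣ) (n : ℤ) :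
    unitsEval K k (LaurentPolynomial.T n) = ((k ^ n : Aˣ) : A) := by
  rw [unitsEval, LaurentPolynomial.T, AddMonoidAlgebra.lift_single]
  simp

theorem commute_unitsEval {k : Aˣ} {x : A} (h : Commute (k : A) x) (b : LaurentPolynomial K) :
    Commute (unitsEval K k b) x := by
  induction b using AddMonoidAlgebra.induction_on with
  | of n => exact (unitsEval_T (K := K) k n).symm ▸ h.units_zpow_left n
  | add p r hp hr => rw [map_add]; exact hp.add_left hr
  | smul c p hp => rw [map_smul]; exact hp.smul_left c

end NoncommutativeAlgebra

/-- If `q` is a primitive `l`-th root of unity, `l > 2` not twice an odd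
integer, and `L` is the smallest even multiple of `l` (so `l' = L` is even),
then in `U_q(osp(1|2))` the following relation holds in the centre:
`(-1)^{L/2} Q_{L/2}(C) = -k^L - k^{-L} + η^L f^L e^L`, with `C = S² + 2`. -/
theorem central_relation_L_even
    {A : Type*} [Ring A] [Algebra ℂ A]
    (q sq : ℂ) (l : ℕ) (hl : 2 < l) (hprim : IsPrimitiveRoot q l)
    (hnot : ¬ ∃ m : ℕ, Odd m ∧ l = 2 * m) (hsq : sq ^ 2 = q)
    (L : ℕ) (hL : L = if Even l then l else 2 * l)
    (e f : A) (k : Aˣ)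
    (rel1 : (k : A) * e = q • (e * (k : A)))
    (rel2 : (k : A) * f = q⁻¹ • (f * (k : A)))
    (rel3 : e * f + f * e = (q - q⁻¹)⁻¹ • ((k : A) - ((k⁻¹ : Aˣ) : A)))
    (η : ℂ) (hη : η = (sq + sq⁻¹) * (q - q⁻¹))
    (S : A) (hS : S = sq • (k : A) - sq⁻¹ • ((k⁻¹ : Aˣ) : A) - η • (f * e))
    (C : A) (hC : C = S ^ 2 + 2) :
    ((-1 : ℂ) ^ (L / 2)) • Polynomial.aeval C (Qcheb (L / 2))
      = -(((k ^ L : Aˣ)) : A) - (((k⁻¹ ^ L : Aˣ)) : A) + (η ^ L) • (f ^ L * e ^ L) := by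
  obtain ⟨M, rfl, hM, hw, hσ⟩ := hprim.exists_half_of_not_two_mul_odd (by omega) hnot hL
  have hq : q ≠ 0 := hprim.ne_zero (by omega)
  have hk'e := inv_mul_eq_inv_smul_of_mul_eq_smul hq rel1
  have heS := e_mul_S_eq_neg hq (hprim.pow_ne_one_of_pos_of_lt two_ne_zero hl) hsq hη rel1 rel3 hS
  have hkS : Commute (k : A) S := hS ▸ (((Commute.refl _).smul_right sq).sub_right
    ((Commute.refl _).units_inv_right.smul_right _)).sub_right
    ((commute_mul_of_mul_eq_smul (inv_mul_cancel₀ hq) rel1 rel2).smul_right η)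
  -- finite products need commutativity: compute in `ℂ[T, T⁻¹][X]`, then evaluate at `k` and `S`
  set Φ := eval₂AlgHom (unitsEval ℂ k) S (commute_unitsEval hkS)
  set ξ := fePowFactor sq q (Polynomial.C (LaurentPolynomial.T 1))
    (Polynomial.C (LaurentPolynomial.T (-1))) (X : (LaurentPolynomial ℂ)[X])
  have hΦC : ∀ b, Φ (Polynomial.C b) = unitsEval ℂ k b := fun b => by simp [Φ]
  have hΦX : Φ X = S := by simp [Φ]
  have hΦ : ∀ j, Φ (ξ j) = fePowFactor sq q (k : A) (k⁻¹ : Aˣ) S j := fun j => by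
    simp only [ξ, map_fePowFactor, hΦC, hΦX, unitsEval_T, zpow_one, zpow_neg_one]
  have h0 : Φ (ξ 0) = η • (f * e) := by rw [hΦ]; simp [fePowFactor, hS]
  have hprod := smul_pow_mul_pow_eq_map_prod Φ ξ h0
    (fun j => by rw [hΦ, hΦ]; exact fePowFactor_mul_eq_mul_fePowFactor_succ rel1 hk'e heS j) (2 * M)
  rw [prod_range_two_mul_fePowFactor hsq hM hw hσ
    (by rw [← map_mul, ← LaurentPolynomial.T_add]; simp) X] at hprod
  rw [Nat.mul_div_cancel_left M two_pos, hprod]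
  simp only [map_add, map_mul, map_pow, map_neg, map_one, map_ofNat, hΦC, hΦX, unitsEval_T,
    zpow_one, zpow_neg_one, ← aeval_ringHom_apply, ← hC, Units.val_pow_eq_pow_val, Algebra.smul_def]
  abel
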